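/- arXiv:2102.09374 — 4 statements merged into one kernel-verified Lean document; each statement's English description precedes it below -/
import Mathlib

section
/- Every completely erasing k-block substitution is strongly erasing: if σ is alternating and for every finite binary word w there exists n with σⁿ(w) = ε, then for every finite binary word w there exists n such that the empty word belongs to w^[n] (i.e., one can reach ε by iteratively k-rounding and applying σ). -/
/-- Apply a `k`-block substitution blockwise to a finite word, dropping the
trailing partial block (the paper's truncation convention). -/
def blockApply (k : Nat) (sigma : List Bool -> List Bool) (w : List Bool) : List Bool :=
  if h : 0 < k && k <= w.length then
    sigma (w.take k) ++ blockApply k sigma (w.drop k)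
  else []
termination_by w.length
decreasing_by
  simp only [Bool.and_eq_true, decide_eq_true_eq] at h
  simp [List.length_drop]
  omega

/-- The alternating extension of a block substitution given by simple
substitutions `s i : Bool -> List Bool` applied to the digit in position `i` mod `k`. -/
def altApply (k : Nat) (s : Nat -> Bool -> List Bool) (w : List Bool) : List Bool :=
  (w.zipIdx.map fun p => s (p.2 % k) p.1).flatten

/-- The set of `k`-roundings of a finite word `w`: extensions of `w` of length
the least multiple of `k` that is `≥ |w|`. -/
def kRound (k : Nat) (w : List Bool) : Set (List Bool) :=
  {u | ∃ v : List Bool, u = w ++ v ∧ u.length = k * ((w.length + k - 1) / k)}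

/-- `wIter k sigma n w` is the set `w^[n]` of the paper: `w^[0] = {w}` and
`w^[n] = {sigma(r) : r a k-rounding of an element of w^[n-1]}`. -/
def wIter (k : Nat) (sigma : List Bool -> List Bool) : Nat -> List Bool -> Set (List Bool)
  | 0, w => {w}
  | n + 1, w => {u | ∃ p ∈ wIter k sigma n w, ∃ r ∈ kRound k p, u = blockApply k sigma r}

/-!
Pad `w` up to a multiple of `k` with a suffix of the erased block `w_ε`. Since `σ` is alternating,
that suffix is erased digit by digit, so `σ` of this rounding equals the alternating image `σ(w)`.
Each step of the complete erasure `σⁿ(w) = ε` is thus realised by one rounding-and-substitution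
step, and `ε ∈ w^[n]`.
-/

section altApply

variable {k : Nat} {s : Nat -> Bool -> List Bool}

@[simp]
lemma altApply_comp_mod (w : List Bool) :
    altApply k (fun i => s (i % k)) w = altApply k s w := by
  simp only [altApply, Nat.mod_mod]

lemma altApply_append (u v : List Bool) :
    altApply k s (u ++ v) =
      altApply k s u ++ altApply k (fun i => s ((i + u.length) % k)) v := by
  rw [altApply, altApply, altApply, List.zipIdx_append, List.map_append, List.flatten_append,
    List.zipIdx_eq_map_add (l := v), List.map_map]
  congr 3
  funext p
  simp [Nat.add_comm, Nat.mod_add_mod]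

lemma altApply_append_of_dvd {u : List Bool} (hu : k ∣ u.length) (v : List Bool) :
    altApply k s (u ++ v) = altApply k s u ++ altApply k s v := by
  have hshift : (fun i => s ((i + u.length) % k)) = fun i => s (i % k) := by
    funext i
    rw [Nat.add_mod, Nat.mod_eq_zero_of_dvd hu, add_zero, Nat.mod_mod]
  rw [altApply_append, hshift, altApply_comp_mod]

lemma altApply_drop_eq_nil {w : List Bool} (hw : altApply k s w = []) {i : Nat}
    (hi : i ≤ w.length) : altApply k (fun j => s ((j + i) % k)) (w.drop i) = [] := by
  have h := altApply_append (k := k) (s := s) (w.take i) (w.drop i)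
  rw [List.take_append_drop, hw, List.length_take_of_le hi] at h
  exact (List.append_eq_nil_iff.mp h.symm).2

end altApply

lemma blockApply_eq_altApply {k : Nat} {sigma : List Bool -> List Bool}
    {s : Nat -> Bool -> List Bool}
    (halt : ∀ w : List Bool, w.length = k → sigma w = altApply k s w)
    {w : List Bool} (hw : k ∣ w.length) : blockApply k sigma w = altApply k s w := by
  induction w using blockApply.induct k with
  | case1 w hlong ih =>
    simp only [Bool.and_eq_true, decide_eq_true_eq] at hlong
    have htake : (w.take k).length = k := List.length_take_of_le hlong.2
    have hdrop : k ∣ (w.drop k).length := by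
      rw [List.length_drop]
      exact Nat.dvd_sub hw dvd_rfl
    rw [blockApply, dif_pos (by simpa using hlong), halt _ htake, ih hdrop,
      ← altApply_append_of_dvd (by rw [htake]), List.take_append_drop]
  | case2 w hshort =>
    simp only [Bool.and_eq_true, decide_eq_true_eq, not_and, not_le] at hshort
    obtain rfl : w = [] := by
      rw [← List.length_eq_zero_iff]
      by_contra hne
      have hpos := Nat.pos_of_ne_zero hne
      exact absurd (Nat.le_of_dvd hpos hw) (not_le.2 (hshort (Nat.pos_of_dvd_of_pos hw hpos)))
    have hcond : ¬(decide (0 < k) && decide (k ≤ ([] : List Bool).length)) = true := by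
      simp only [List.length_nil, Bool.and_eq_true, decide_eq_true_eq]
      omega
    rw [blockApply, dif_neg hcond]
    rfl

lemma append_mem_kRound {k : Nat} {w v : List Bool} (hdvd : k ∣ (w ++ v).length)
    (hv : v.length < k) : w ++ v ∈ kRound k w := by
  refine ⟨v, rfl, ?_⟩
  obtain ⟨q, hq⟩ := hdvd
  rw [List.length_append] at hq
  have hround : (w.length + k - 1) / k = q := by
    apply Nat.div_eq_of_lt_le
    · rw [Nat.mul_comm]
      omega
    · rw [Nat.succ_mul, Nat.mul_comm]
      omega
  rw [List.length_append, hq, hround]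

lemma exists_mem_kRound_altApply_eq {k : Nat} {s : Nat -> Bool -> List Bool} {weps : List Bool}
    (hk : 0 < k) (hlen : weps.length = k) (heps : altApply k s weps = []) (w : List Bool) :
    ∃ r ∈ kRound k w, k ∣ r.length ∧ altApply k s r = altApply k s w := by
  by_cases h : w.length % k = 0
  · refine ⟨w, ?_, Nat.dvd_of_mod_eq_zero h, rfl⟩
    simpa using append_mem_kRound (v := []) (by simpa using Nat.dvd_of_mod_eq_zero h) hk
  · have hlt := Nat.mod_lt w.length hk
    have hpad : (weps.drop (w.length % k)).length = k - w.length % k := by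
      rw [List.length_drop, hlen]
    have hdvd : k ∣ (w ++ weps.drop (w.length % k)).length := by
      refine ⟨w.length / k + 1, ?_⟩
      have := Nat.div_add_mod w.length k
      rw [List.length_append, hpad, Nat.mul_succ]
      omega
    have hshift : (fun j => s ((j + w.length) % k)) = fun j => s ((j + w.length % k) % k) := by
      funext j
      rw [Nat.add_mod_mod]
    refine ⟨_, append_mem_kRound hdvd (by omega), hdvd, ?_⟩
    rw [altApply_append, hshift, altApply_drop_eq_nil heps (by omega),
      List.append_nil]

lemma wIter_succ_of_mem_kRound {k : Nat} {sigma : List Bool -> List Bool} {w r u : List Bool}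
    (hr : r ∈ kRound k w) :
    ∀ {n : Nat}, u ∈ wIter k sigma n (blockApply k sigma r) → u ∈ wIter k sigma (n + 1) w
  | 0, hu => ⟨w, rfl, r, hr, hu⟩
  | _ + 1, ⟨p, hp, r', hr', hu⟩ => ⟨p, wIter_succ_of_mem_kRound hr hp, r', hr', hu⟩

lemma iterate_altApply_mem_wIter {k : Nat} {sigma : List Bool -> List Bool}
    {s : Nat -> Bool -> List Bool}
    (hstep : ∀ w : List Bool, ∃ r ∈ kRound k w, blockApply k sigma r = altApply k s w) :
    ∀ (n : Nat) (w : List Bool), (altApply k s)^[n] w ∈ wIter k sigma n w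
  | 0, _ => rfl
  | n + 1, w => by
    obtain ⟨r, hr, hσ⟩ := hstep w
    rw [Function.iterate_succ_apply, ← hσ]
    exact wIter_succ_of_mem_kRound hr (iterate_altApply_mem_wIter hstep n _)

theorem completely_erasing_implies_strongly_erasing_general
    (k : Nat) (sigma : List Bool -> List Bool) (weps : List Bool)
    (hk : 2 ≤ k) (hlen : weps.length = k)
    (herase : ∀ w : List Bool, w.length = k → (sigma w = [] ↔ w = weps))
    (s : Nat -> Bool -> List Bool)
    (halt : ∀ w : List Bool, w.length = k → sigma w = altApply k s w)
    (hCE : ∀ w : List Bool, ∃ n : Nat, (altApply k s)^[n] w = []) :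
    ∀ w : List Bool, ∃ n : Nat, [] ∈ wIter k sigma n w := by
  have heps : altApply k s weps = [] := by
    rw [← halt weps hlen]
    exact (herase weps hlen).2 rfl
  have hstep (w : List Bool) : ∃ r ∈ kRound k w, blockApply k sigma r = altApply k s w := by
    obtain ⟨r, hr, hdvd, heq⟩ := exists_mem_kRound_altApply_eq (by omega) hlen heps w
    exact ⟨r, hr, by rw [blockApply_eq_altApply halt hdvd, heq]⟩
  intro w
  obtain ⟨n, hn⟩ := hCE w
  exact ⟨n, hn ▸ iterate_altApply_mem_wIter hstep n w⟩

/-- every completely erasing `k`-block substitution (alternating,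
with every finite word vanishing under some iterate of the alternating
extension) is strongly erasing: for every finite word `w` there is `n` with
`ε ∈ w^[n]`. -/
theorem completely_erasing_implies_strongly_erasing
    (k : Nat) (sigma : List Bool -> List Bool) (weps : List Bool)
    (hk : 2 ≤ k) (hlen : weps.length = k)
    (hne1 : weps ≠ List.replicate k true)
    (herase : ∀ w : List Bool, w.length = k → (sigma w = [] ↔ w = weps))
    (s : Nat -> Bool -> List Bool)
    (halt : ∀ w : List Bool, w.length = k → sigma w = altApply k s w)
    (hCE : ∀ w : List Bool, ∃ n : Nat, (altApply k s)^[n] w = []) :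
    ∀ w : List Bool, ∃ n : Nat, [] ∈ wIter k sigma n w :=
  completely_erasing_implies_strongly_erasing_general k sigma weps hk hlen herase s halt hCE
end

section
/- For the 2-block substitution σ₃ defined by σ₃(00)=ε, σ₃(01)=1, σ₃(10)=0, σ₃(11)=01, extended alternately (odd-position 0s and even-position 0s map to ε, odd-position 1s map to 0, even-position 1s map to 1), every finite binary word w of positive length satisfies |σ₃²(w)| < |w|. Consequently for every finite word w there exists n with σ₃ⁿ(w) = ε, i.e., σ₃ is completely erasing. -/
/-- The simple substitutions of the alternating 2-block substitution σ₃: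
position ≡ 0 (mod 2): 0 ↦ ε, 1 ↦ 0; position ≡ 1 (mod 2): 0 ↦ ε, 1 ↦ 1.
Thus σ₃(00)=ε, σ₃(01)=1, σ₃(10)=0, σ₃(11)=01. -/
def s3 : Nat -> Bool -> List Bool := fun i b =>
  if b then (if i % 2 = 0 then [false] else [true]) else []

/-!
Every letter of `σ₃(w)` comes from a `1` of `w`, so `|σ₃(w)|` is the number of `1`s in `w`;
hence `|σ₃²(w)| ≤ |σ₃(w)| ≤ |w|`. If `w` starts with `0` the second inequality is strict, and
if `w` starts with `1` then `σ₃(w)` starts with `0`, so the first one is. Iterating, the length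
strictly decreases every two steps until the word is empty.
-/

theorem List.exists_iterate_eq_nil_of_length_lt {α : Type*} {f : List α → List α} {m : ℕ}
    (hf : ∀ w, w ≠ [] → (f^[m] w).length < w.length) (w : List α) :
    ∃ n, f^[n] w = [] := by
  by_cases hw : w = []
  · exact ⟨0, hw⟩
  · obtain ⟨n, hn⟩ := exists_iterate_eq_nil_of_length_lt hf (f^[m] w)
    exact ⟨n + m, by rw [Function.iterate_add_apply, hn]⟩
termination_by w.length
decreasing_by exact hf w hw

theorem count_true_lt_length_cons_false (l : List Bool) :
    (false :: l).count true < (false :: l).length := by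
  simpa using Nat.lt_succ_of_le (l.count_le_length (a := true))

theorem length_s3 (i : ℕ) (b : Bool) : (s3 i b).length = b.toNat := by
  cases b
  · rfl
  · simp only [s3, if_true]; split_ifs <;> rfl

theorem length_altApply_s3 (w : List Bool) : (altApply 2 s3 w).length = w.count true := by
  simp only [altApply, List.length_flatten, List.map_map, Function.comp_def, length_s3]
  change (w.zipIdx.map (Bool.toNat ∘ Prod.fst)).sum = _
  rw [← List.map_map, List.zipIdx_map_fst]
  induction w with
  | nil => rfl
  | cons b w ih => cases b <;> simp [ih, Nat.add_comm]

theorem altApply_s3_cons_true (w : List Bool) :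
    ∃ r, altApply 2 s3 (true :: w) = false :: r :=
  ⟨_, by simp only [altApply, List.zipIdx_cons, List.map_cons, List.flatten_cons, s3]; rfl⟩

theorem length_altApply_s3_iterate_two_lt (w : List Bool) (hw : w ≠ []) :
    ((altApply 2 s3)^[2] w).length < w.length := by
  obtain ⟨b, t, rfl⟩ := List.exists_cons_of_ne_nil hw
  simp only [Function.iterate_succ, Function.iterate_zero, Function.comp_apply, id_eq]
  cases b with
  | false =>
    calc (altApply 2 s3 (altApply 2 s3 (false :: t))).length
        = (altApply 2 s3 (false :: t)).count true := length_altApply_s3 _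
      _ ≤ (altApply 2 s3 (false :: t)).length := List.count_le_length
      _ = (false :: t).count true := length_altApply_s3 _
      _ < (false :: t).length := count_true_lt_length_cons_false t
  | true =>
    obtain ⟨r, hr⟩ := altApply_s3_cons_true t
    calc (altApply 2 s3 (altApply 2 s3 (true :: t))).length
        = (false :: r).count true := by rw [length_altApply_s3, hr]
      _ < (false :: r).length := count_true_lt_length_cons_false r
      _ = (true :: t).count true := by rw [← hr, length_altApply_s3]
      _ ≤ (true :: t).length := List.count_le_length

/-- every nonempty finite word strictly shrinks under two
applications of σ₃'s alternating extension; consequently every finite word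
vanishes under some iterate, i.e. σ₃ is completely erasing. -/
theorem sigma3_completely_erasing :
    (∀ w : List Bool, w ≠ [] → ((altApply 2 s3)^[2] w).length < w.length) ∧
    (∀ w : List Bool, ∃ n : Nat, (altApply 2 s3)^[n] w = []) :=
  ⟨length_altApply_s3_iterate_two_lt,
    List.exists_iterate_eq_nil_of_length_lt length_altApply_s3_iterate_two_lt⟩
end

section
/- If σ is a boundedly erasing k-block substitution (completely erasing with bounded vanishing order), then σ fails the optimality condition: there exists an infinite binary word w that cannot be written as an infinite concatenation of the nonempty images σ(u), u ∈ {0,1}^k. -/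
/-- The length-`m` prefix of an infinite binary word. -/
def prefixOf (u : Nat -> Bool) (m : Nat) : List Bool := List.ofFn fun i : Fin m => u i

/-- Concatenation of the first `m` words of a sequence of finite words. -/
def concatPre (v : Nat -> List Bool) (m : Nat) : List Bool :=
  (List.ofFn fun i : Fin m => v i).flatten

/-- The optimality condition: every infinite binary word is an infinite
concatenation of nonempty images of length-`k` blocks under `sigma`. -/
def OC (k : Nat) (sigma : List Bool -> List Bool) : Prop :=
  ∀ w : Nat -> Bool, ∃ u : Nat -> List Bool,
    (∀ i, (u i).length = k ∧ sigma (u i) ≠ []) ∧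
    ∀ m, concatPre (fun i => sigma (u i)) m
        = prefixOf w (concatPre (fun i => sigma (u i)) m).length

/-!
Under the optimality condition every infinite word `w` is the image, under the extension of `σ` to
infinite words, of another infinite word `w'` (the concatenation of the blocks `u i`), and since no
block used is erased, long prefixes of `w'` map to long prefixes of `w`. Iterating, for every `j`
some finite word has a `j`-fold image that is a nonempty prefix of `w`. Bounded erasure makes every
`N`-fold image empty.
-/

namespace BoundedlyErasing

section altApply

variable {k : ℕ} {s : ℕ → Bool → List Bool}

theorem flatten_map_zipIdx_congr_mod (t : List Bool) {n m : ℕ} (h : n % k = m % k) :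
    ((t.zipIdx n).map fun p => s (p.2 % k) p.1).flatten
      = ((t.zipIdx m).map fun p => s (p.2 % k) p.1).flatten := by
  induction t generalizing n m with
  | nil => rfl
  | cons a t ih =>
    simp only [List.zipIdx_cons, List.map_cons, List.flatten_cons]
    rw [h, ih (n := n + 1) (m := m + 1) (by rw [Nat.add_mod, h, ← Nat.add_mod])]

theorem altApply_append (x t : List Bool) :
    altApply k s (x ++ t)
      = altApply k s x ++ ((t.zipIdx x.length).map fun p => s (p.2 % k) p.1).flatten := by
  simp only [altApply, List.zipIdx_append, Nat.zero_add, List.map_append, List.flatten_append]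

theorem altApply_append_of_length_mod_eq_zero (x t : List Bool) (h : x.length % k = 0) :
    altApply k s (x ++ t) = altApply k s x ++ altApply k s t := by
  rw [altApply_append, flatten_map_zipIdx_congr_mod t (m := 0) (by simpa using h)]
  rfl

theorem altApply_prefix {x y : List Bool} (h : x <+: y) : altApply k s x <+: altApply k s y := by
  obtain ⟨t, rfl⟩ := h
  rw [altApply_append]
  exact List.prefix_append _ _

end altApply

theorem prefixOf_length (w : ℕ → Bool) (m : ℕ) : (prefixOf w m).length = m := by
  simp [prefixOf]

theorem prefixOf_add (w : ℕ → Bool) (a b : ℕ) :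
    prefixOf w (a + b) = prefixOf w a ++ List.ofFn fun i : Fin b => w (a + i) := by
  rw [prefixOf, prefixOf, List.ofFn_add]
  rfl

theorem prefixOf_prefix (w : ℕ → Bool) {a b : ℕ} (h : a ≤ b) : prefixOf w a <+: prefixOf w b := by
  rw [← Nat.add_sub_cancel' h, prefixOf_add]
  exact List.prefix_append _ _

theorem eq_prefixOf_of_prefix {x : List Bool} {w : ℕ → Bool} {n : ℕ} (h : x <+: prefixOf w n) :
    x = prefixOf w x.length := by
  refine List.ext_getElem (prefixOf_length _ _).symm fun i hi _ => ?_
  rw [h.getElem hi]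
  simp [prefixOf]

theorem concatPre_succ (v : ℕ → List Bool) (m : ℕ) :
    concatPre v (m + 1) = concatPre v m ++ v m := by
  rw [concatPre, concatPre, List.ofFn_succ']
  simp [List.concat_eq_append]

theorem concatPre_length {k : ℕ} {v : ℕ → List Bool} (hv : ∀ i, (v i).length = k) (m : ℕ) :
    (concatPre v m).length = k * m := by
  induction m with
  | zero => rfl
  | succ m ih => rw [concatPre_succ, List.length_append, ih, hv, Nat.mul_succ]

theorem altApply_concatPre {k : ℕ} {s : ℕ → Bool → List Bool} {u : ℕ → List Bool}
    (hu : ∀ i, (u i).length = k) (m : ℕ) :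
    altApply k s (concatPre u m) = concatPre (fun i => altApply k s (u i)) m := by
  induction m with
  | zero => rfl
  | succ m ih =>
    rw [concatPre_succ, altApply_append_of_length_mod_eq_zero _ _
      (by rw [concatPre_length hu, Nat.mul_mod_right]), ih, concatPre_succ]

theorem le_concatPre_length {v : ℕ → List Bool} (hv : ∀ i, v i ≠ []) (m : ℕ) :
    m ≤ (concatPre v m).length := by
  induction m with
  | zero => exact Nat.zero_le _
  | succ m ih =>
    rw [concatPre_succ, List.length_append]
    have := List.length_pos_iff.mpr (hv m)
    omega

def flattenBlocks (k : ℕ) (u : ℕ → List Bool) (n : ℕ) : Bool := (u (n / k)).getD (n % k) false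

theorem concatPre_eq_prefixOf_flattenBlocks {k : ℕ} {u : ℕ → List Bool}
    (hu : ∀ i, (u i).length = k) (m : ℕ) :
    concatPre u m = prefixOf (flattenBlocks k u) (k * m) := by
  induction m with
  | zero => rfl
  | succ m ih =>
    have hblock : u m = List.ofFn fun i : Fin k => flattenBlocks k u (k * m + i) := by
      refine List.ext_getElem (by simp [hu m]) fun i hi hik => ?_
      rw [List.length_ofFn] at hik
      have hdiv : (k * m + i) / k = m := by
        rw [Nat.mul_add_div (by omega), Nat.div_eq_of_lt hik, Nat.add_zero]
      have hmod : (k * m + i) % k = i := by rw [Nat.mul_add_mod, Nat.mod_eq_of_lt hik]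
      simp only [flattenBlocks, List.getElem_ofFn, hdiv, hmod]
      exact (List.getD_eq_getElem _ _ hi).symm
    rw [concatPre_succ, ih, Nat.mul_succ, prefixOf_add, ← hblock]

/-- `f`, extended to infinite words by continuity, sends `w'` to `w`, and does so with images of
unbounded length. -/
def IsPreimage (f : List Bool → List Bool) (w' w : ℕ → Bool) : Prop :=
  (∀ n, ∃ L, f (prefixOf w' n) = prefixOf w L) ∧ ∀ m, ∃ n, m ≤ (f (prefixOf w' n)).length

theorem exists_iterate_eq_prefixOf {f : List Bool → List Bool}
    (hf : ∀ {x y}, x <+: y → f x <+: f y) (hpre : ∀ w, ∃ w', IsPreimage f w' w) (j : ℕ) :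
    ∀ (w : ℕ → Bool) (m : ℕ), ∃ x L, m ≤ L ∧ f^[j] x = prefixOf w L := by
  induction j with
  | zero => exact fun w m => ⟨prefixOf w m, m, le_rfl, rfl⟩
  | succ j ih =>
    intro w m
    obtain ⟨w', himage, hlong⟩ := hpre w
    obtain ⟨n, hn⟩ := hlong m
    obtain ⟨x, L', hnL', hx⟩ := ih w' n
    obtain ⟨L, hL⟩ := himage L'
    have hmL : m ≤ L := calc
      m ≤ (f (prefixOf w' n)).length := hn
      _ ≤ (f (prefixOf w' L')).length := (hf (prefixOf_prefix w' hnL')).length_le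
      _ = L := by rw [hL, prefixOf_length]
    exact ⟨x, L, hmL, by rw [Function.iterate_succ_apply', hx, hL]⟩

theorem exists_isPreimage_of_OC {k : ℕ} {sigma : List Bool → List Bool} {s : ℕ → Bool → List Bool}
    (halt : ∀ w : List Bool, w.length = k → sigma w = altApply k s w) (hOC : OC k sigma)
    (w : ℕ → Bool) : ∃ w', IsPreimage (altApply k s) w' w := by
  obtain ⟨u, hu, hpre⟩ := hOC w
  have hk : 0 < k := Nat.pos_of_ne_zero fun hk0 =>
    (hu 0).2 (by rw [halt _ (hu 0).1, List.eq_nil_of_length_eq_zero ((hu 0).1.trans hk0)]; rfl)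
  have himage (M : ℕ) : altApply k s (prefixOf (flattenBlocks k u) (k * M))
      = concatPre (fun i => sigma (u i)) M := by
    rw [← concatPre_eq_prefixOf_flattenBlocks (fun i => (hu i).1),
      altApply_concatPre (fun i => (hu i).1)]
    simp only [halt _ (hu _).1]
  refine ⟨flattenBlocks k u, fun n => ⟨_, eq_prefixOf_of_prefix
    (n := (concatPre (fun i => sigma (u i)) n).length) ?_⟩, fun m => ⟨k * m, ?_⟩⟩
  · rw [← hpre, ← himage]
    exact altApply_prefix (prefixOf_prefix _ (Nat.le_mul_of_pos_left n hk))
  · rw [himage]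
    exact le_concatPre_length (fun i => (hu i).2) m

end BoundedlyErasing

theorem boundedly_erasing_not_optimal_general
    (k : Nat) (sigma : List Bool -> List Bool)
    (s : Nat -> Bool -> List Bool)
    (halt : ∀ w : List Bool, w.length = k → sigma w = altApply k s w)
    (hbound : ∃ N : Nat, ∀ w : List Bool, ∃ n ≤ N, (altApply k s)^[n] w = []) :
    ¬ OC k sigma := by
  intro hOC
  obtain ⟨N, hN⟩ := hbound
  obtain ⟨x, L, hL, hx⟩ :=
    BoundedlyErasing.exists_iterate_eq_prefixOf BoundedlyErasing.altApply_prefix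
      (BoundedlyErasing.exists_isPreimage_of_OC halt hOC) N (fun _ => false) 1
  obtain ⟨n, hn, hxn⟩ := hN x
  have hvanish : (altApply k s)^[N] x = [] := by
    rw [← Nat.sub_add_cancel hn, Function.iterate_add_apply, hxn]
    exact Function.iterate_fixed rfl _
  have := congrArg List.length (hx.symm.trans hvanish)
  rw [BoundedlyErasing.prefixOf_length, List.length_nil] at this
  omega

/-- a boundedly erasing `k`-block substitution (alternating, with
bounded vanishing order) fails the optimality condition. -/
theorem boundedly_erasing_not_optimal
    (k : Nat) (sigma : List Bool -> List Bool) (weps : List Bool)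
    (hk : 2 ≤ k) (hlen : weps.length = k)
    (hne1 : weps ≠ List.replicate k true)
    (herase : ∀ w : List Bool, w.length = k → (sigma w = [] ↔ w = weps))
    (s : Nat -> Bool -> List Bool)
    (halt : ∀ w : List Bool, w.length = k → sigma w = altApply k s w)
    (hbound : ∃ N : Nat, ∀ w : List Bool, ∃ n ≤ N, (altApply k s)^[n] w = []) :
    ¬ OC k sigma :=
  boundedly_erasing_not_optimal_general k sigma s halt hbound
end

section
/- Suppose σ is a k-block erasing substitution satisfying the optimality condition. Then the induced interval map f_σ: [0,1] → [0,1] is surjective. -/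
/-- Value of a finite binary word read as binary digits after the point. -/
noncomputable def valFin (w : List Bool) : ℝ :=
  (w.zipIdx.map fun p => if p.1 then ((2:ℝ))⁻¹ ^ (p.2 + 1) else 0).sum

/-- Value of an infinite binary word read as binary digits after the point. -/
noncomputable def valInf (u : Nat -> Bool) : ℝ :=
  ∑' i : Nat, if u i then ((2:ℝ))⁻¹ ^ (i + 1) else 0

/-- A word is not eventually zero (it has infinitely many ones). -/
def NEZ (u : Nat -> Bool) : Prop := ∀ n, ∃ m, n ≤ m ∧ u m = true

open Classical in
/-- The unique binary expansion of `x ∈ (0,1]` not ending in `0^∞`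
(junk value, the zero word, if no such expansion exists). -/
noncomputable def tilde (x : ℝ) : Nat -> Bool :=
  if h : ∃ u : Nat -> Bool, NEZ u ∧ valInf u = x then h.choose else fun _ => false

open Classical in
/-- The interval map induced by the erasing `k`-block substitution `sigma`
(with erased block `weps`) acting on binary expansions: `f x = 0.sigma(x̃)`,
with value `0` at `x = 0` (no expansion not ending in `0^∞`) and when
`x̃ = weps^∞`. -/
noncomputable def fSigma (k : Nat) (sigma : List Bool -> List Bool) (weps : List Bool)
    (x : ℝ) : ℝ :=
  if (¬ ∃ u : Nat -> Bool, NEZ u ∧ valInf u = x) ∨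
     (∀ i : Nat, tilde x i = weps.getD (i % k) false) then 0
  else ⨆ n : Nat, valFin (blockApply k sigma (prefixOf (tilde x) (n * k)))


/-!
Given `y ∈ [0,1]`, take any binary expansion `w` of `y`. The optimality condition cuts `w` into
nonempty images `σ(u₀) σ(u₁) ⋯` of blocks `uᵢ ≠ w_ε`. The word `u₀ w_ε u₁ w_ε u₂ ⋯` is mapped by
`σ` to `w` again, since `σ(w_ε) = ε`. Interleaving `w_ε` makes the word have infinitely many ones:
either `w_ε` contains a one, or `w_ε = 0^k` and then every `uᵢ` does. As `u₀ ≠ w_ε`, it is not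
`w_ε^∞` either. So it is `x̃` for the point `x` it represents, and `f_σ(x) = 0.w = y`.
-/

open Finset

noncomputable def bitTerm (u : ℕ → Bool) (i : ℕ) : ℝ := if u i then (2 : ℝ)⁻¹ ^ (i + 1) else 0

lemma bitTerm_nonneg (u : ℕ → Bool) (i : ℕ) : 0 ≤ bitTerm u i := by
  unfold bitTerm; split <;> positivity

lemma bitTerm_le (u : ℕ → Bool) (i : ℕ) : bitTerm u i ≤ (2 : ℝ)⁻¹ ^ (i + 1) := by
  unfold bitTerm; split
  · exact le_rfl
  · positivity

lemma hasSum_inv_two_pow_add (n : ℕ) :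
    HasSum (fun i : ℕ => (2 : ℝ)⁻¹ ^ (i + n + 1)) ((2 : ℝ)⁻¹ ^ n) :=
  (hasSum_geometric_two' ((2 : ℝ)⁻¹ ^ n)).congr_fun fun i => by
    rw [pow_succ, pow_add, inv_pow 2 i]; ring

lemma summable_bitTerm (u : ℕ → Bool) : Summable (bitTerm u) :=
  .of_nonneg_of_le (bitTerm_nonneg u) (bitTerm_le u) (hasSum_inv_two_pow_add 0).summable

lemma valInf_eq_sum_add_tsum (u : ℕ → Bool) (n : ℕ) :
    valInf u = ∑ i ∈ range n, bitTerm u i + ∑' i, bitTerm u (i + n) :=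
  ((summable_bitTerm u).sum_add_tsum_nat_add n).symm

lemma valInf_le_sum_add (u : ℕ → Bool) (n : ℕ) :
    valInf u ≤ ∑ i ∈ range n, bitTerm u i + (2 : ℝ)⁻¹ ^ n := by
  rw [valInf_eq_sum_add_tsum u n, ← (hasSum_inv_two_pow_add n).tsum_eq]
  exact (add_le_add_iff_left _).2 (Summable.tsum_le_tsum (fun i => bitTerm_le u (i + n))
    ((summable_nat_add_iff n).2 (summable_bitTerm u)) (hasSum_inv_two_pow_add n).summable)

lemma sum_le_valInf (u : ℕ → Bool) (n : ℕ) : ∑ i ∈ range n, bitTerm u i ≤ valInf u :=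
  (summable_bitTerm u).sum_le_tsum _ (fun i _ => bitTerm_nonneg u i)

lemma valInf_nonneg (u : ℕ → Bool) : 0 ≤ valInf u := by
  simpa using sum_le_valInf u 0

lemma valInf_le_one (u : ℕ → Bool) : valInf u ≤ 1 := by
  simpa using valInf_le_sum_add u 0

lemma sum_lt_valInf_iff (u : ℕ → Bool) (n : ℕ) :
    ∑ i ∈ range n, bitTerm u i < valInf u ↔ ∃ m, n ≤ m ∧ u m = true := by
  have hs := (summable_nat_add_iff n).2 (summable_bitTerm u)
  rw [valInf_eq_sum_add_tsum u n, lt_add_iff_pos_right]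
  constructor
  · intro hpos
    by_contra! hzero
    refine hpos.ne' ((tsum_congr fun i => ?_).trans tsum_zero)
    simp [bitTerm, hzero (i + n) (by omega)]
  · rintro ⟨m, hnm, hm⟩
    refine hs.tsum_pos (fun i => bitTerm_nonneg u _) (m - n) ?_
    simp [bitTerm, Nat.sub_add_cancel hnm, hm]

lemma NEZ_iff_forall_sum_lt_valInf (u : ℕ → Bool) :
    NEZ u ↔ ∀ n, ∑ i ∈ range n, bitTerm u i < valInf u := by
  simp only [NEZ, sum_lt_valInf_iff]

lemma valInf_lt_of_first_diff {a b : ℕ → Bool} {n : ℕ} (ha : NEZ a)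
    (hsum : ∑ i ∈ range n, bitTerm a i = ∑ i ∈ range n, bitTerm b i)
    (han : a n = true) (hbn : b n = false) : valInf b < valInf a :=
  calc valInf b ≤ ∑ i ∈ range (n + 1), bitTerm b i + (2 : ℝ)⁻¹ ^ (n + 1) :=
        valInf_le_sum_add b (n + 1)
    _ = ∑ i ∈ range (n + 1), bitTerm a i := by
      rw [sum_range_succ, sum_range_succ, hsum]; simp [bitTerm, han, hbn]
    _ < valInf a := (NEZ_iff_forall_sum_lt_valInf a).1 ha (n + 1)

lemma NEZ.eq_of_valInf_eq {a b : ℕ → Bool} (ha : NEZ a) (hb : NEZ b)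
    (hab : valInf a = valInf b) : a = b := by
  funext n
  induction n using Nat.strong_induction_on with
  | _ n ih =>
    have hsum : ∑ i ∈ range n, bitTerm a i = ∑ i ∈ range n, bitTerm b i :=
      sum_congr rfl fun i hi => by simp [bitTerm, ih i (mem_range.1 hi)]
    cases han : a n <;> cases hbn : b n
    · rfl
    · exact absurd hab (valInf_lt_of_first_diff hb hsum.symm hbn han).ne
    · exact absurd hab (valInf_lt_of_first_diff ha hsum han hbn).ne'
    · rfl

lemma tilde_valInf {v : ℕ → Bool} (hv : NEZ v) : tilde (valInf v) = v := by
  have hex : ∃ u, NEZ u ∧ valInf u = valInf v := ⟨v, hv, rfl⟩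
  rw [tilde, dif_pos hex]
  exact hex.choose_spec.1.eq_of_valInf_eq hv hex.choose_spec.2

lemma exists_valInf_eq {y : ℝ} (hy : y ∈ Set.Icc 0 1) : ∃ w, valInf w = y := by
  obtain ⟨d, -, rfl⟩ := Real.ofDigits_SurjOn (b := 2) one_lt_two hy
  refine ⟨fun i => d i = 1, tsum_congr fun i => ?_⟩
  rcases Fin.exists_fin_two.mp ⟨d i, rfl⟩ with h | h <;> simp [Real.ofDigitsTerm, h]

lemma prefixOf_add (u : ℕ → Bool) (a b : ℕ) :
    prefixOf u (a + b) = prefixOf u a ++ List.ofFn (fun j : Fin b => u (a + j)) := by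
  simp only [prefixOf, List.ofFn_add]; rfl

lemma length_prefixOf (u : ℕ → Bool) (m : ℕ) : (prefixOf u m).length = m := by
  simp [prefixOf]

lemma valFin_append_singleton (l : List Bool) (b : Bool) :
    valFin (l ++ [b]) = valFin l + if b then (2 : ℝ)⁻¹ ^ (l.length + 1) else 0 := by
  simp [valFin, List.zipIdx_append]

lemma valFin_prefixOf (u : ℕ → Bool) (n : ℕ) :
    valFin (prefixOf u n) = ∑ i ∈ range n, bitTerm u i := by
  induction n with
  | zero => simp [prefixOf, valFin]
  | succ n ih =>
    rw [prefixOf_add, sum_range_succ, ← ih]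
    simp [valFin_append_singleton, length_prefixOf, bitTerm]

lemma ciSup_valFin_eq_valInf {w : ℕ → Bool} {c : ℕ → List Bool}
    (hprefix : ∀ n, c n = prefixOf w (c n).length) (hunbdd : ∀ M, ∃ n, M ≤ (c n).length) :
    ⨆ n, valFin (c n) = valInf w := by
  have hval : ∀ n, valFin (c n) = ∑ i ∈ range (c n).length, bitTerm w i := fun n => by
    conv_lhs => rw [hprefix n]
    exact valFin_prefixOf w _
  simp only [hval]
  refine le_antisymm (ciSup_le fun n => sum_le_valInf w _) ?_
  refine (summable_bitTerm w).tsum_le_of_sum_range_le fun M => ?_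
  obtain ⟨n, hn⟩ := hunbdd M
  refine le_ciSup_of_le ⟨valInf w, ?_⟩ n ?_
  · rintro _ ⟨n, rfl⟩; exact sum_le_valInf w _
  · exact sum_le_sum_of_subset_of_nonneg (range_subset_range.2 hn) fun i _ _ => bitTerm_nonneg w i

lemma concatPre_zero (v : ℕ → List Bool) : concatPre v 0 = [] := rfl

lemma concatPre_succ (v : ℕ → List Bool) (n : ℕ) :
    concatPre v (n + 1) = concatPre v n ++ v n := by
  rw [concatPre, concatPre, List.ofFn_succ']
  simp

lemma concatPre_succ' (v : ℕ → List Bool) (n : ℕ) :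
    concatPre v (n + 1) = v 0 ++ concatPre (fun i => v (i + 1)) n := by
  simp [concatPre, List.ofFn_succ]

lemma le_length_concatPre {v : ℕ → List Bool} (hv : ∀ i, v i ≠ []) (n : ℕ) :
    n ≤ (concatPre v n).length := by
  induction n with
  | zero => exact Nat.zero_le _
  | succ n ih =>
    rw [concatPre_succ, List.length_append]
    have := List.length_pos_iff.2 (hv n)
    omega

lemma blockApply_nil (k : ℕ) (sigma : List Bool → List Bool) : blockApply k sigma [] = [] := by
  rw [blockApply, dif_neg (by simp; omega)]

lemma blockApply_append {k : ℕ} (hk : 0 < k) (sigma : List Bool → List Bool) {b : List Bool}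
    (hb : b.length = k) (w : List Bool) :
    blockApply k sigma (b ++ w) = sigma b ++ blockApply k sigma w := by
  rw [blockApply, dif_pos (by simp [hb, hk]), List.take_left' hb, List.drop_left' hb]

lemma blockApply_concatPre {k : ℕ} (hk : 0 < k) (sigma : List Bool → List Bool)
    {v : ℕ → List Bool} (hv : ∀ i, (v i).length = k) (n : ℕ) :
    blockApply k sigma (concatPre v n) = concatPre (fun i => sigma (v i)) n := by
  induction n generalizing v with
  | zero => exact blockApply_nil k sigma
  | succ n ih =>
    rw [concatPre_succ', blockApply_append hk sigma (hv 0), ih fun i => hv (i + 1),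
      concatPre_succ']

/-- The infinite word `v 0 ++ v 1 ++ ⋯` when every `v i` has length `k`. The exceptional case
`x̃ = w_ε^∞` of `fSigma` is `tilde x = blockWord k fun _ => weps`. -/
def blockWord (k : ℕ) (v : ℕ → List Bool) : ℕ → Bool := fun j => (v (j / k)).getD (j % k) false

lemma blockWord_mul_add {k j : ℕ} (v : ℕ → List Bool) (m : ℕ) (hj : j < k) :
    blockWord k v (m * k + j) = (v m).getD j false := by
  have hk : 0 < k := by omega
  simp only [blockWord, add_comm (m * k), Nat.add_mul_div_right _ _ hk, Nat.add_mul_mod_self_right,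
    Nat.div_eq_of_lt hj, Nat.mod_eq_of_lt hj, zero_add]

lemma prefixOf_blockWord {k : ℕ} {v : ℕ → List Bool} (hv : ∀ i, (v i).length = k) (n : ℕ) :
    prefixOf (blockWord k v) (n * k) = concatPre v n := by
  induction n with
  | zero => simp [prefixOf, concatPre_zero]
  | succ n ih =>
    rw [add_mul, one_mul, prefixOf_add, ih, concatPre_succ]
    congr 1
    refine List.ext_getElem (by simp [hv]) fun j hj _ => ?_
    rw [List.getElem_ofFn, blockWord_mul_add v n (by simpa using hj), List.getD_eq_getElem]

lemma NEZ_blockWord {k : ℕ} {v : ℕ → List Bool} (hv : ∀ i, (v i).length = k)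
    (hinf : ∀ N, ∃ l, N ≤ l ∧ true ∈ v l) : NEZ (blockWord k v) := by
  intro N
  obtain ⟨l, hNl, hl⟩ := hinf N
  obtain ⟨j, hj, hjt⟩ := List.mem_iff_getElem.1 hl
  rw [hv] at hj
  refine ⟨l * k + j, ?_, ?_⟩
  · nlinarith
  · rw [blockWord_mul_add v l hj, List.getD_eq_getElem _ _ (by rwa [hv]), hjt]

def interleave {α : Type*} (u : ℕ → α) (a : α) : ℕ → α :=
  fun i => if i % 2 = 0 then u (i / 2) else a

lemma concatPre_interleave_nil (v : ℕ → List Bool) (n : ℕ) :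
    concatPre (interleave v []) n = concatPre v ((n + 1) / 2) := by
  induction n with
  | zero => rfl
  | succ n ih =>
    rw [concatPre_succ, ih, interleave]
    rcases Nat.even_or_odd' n with ⟨m, rfl | rfl⟩
    · rw [if_pos (by omega), show (2 * m + 1 + 1) / 2 = m + 1 by omega,
        show (2 * m + 1) / 2 = m by omega, show 2 * m / 2 = m by omega, concatPre_succ]
    · rw [if_neg (by omega), List.append_nil, show (2 * m + 1 + 1 + 1) / 2 = m + 1 by omega,
        show (2 * m + 1 + 1) / 2 = m + 1 by omega]

lemma fSigma_valInf {k : ℕ} {sigma : List Bool → List Bool} {weps : List Bool} {v : ℕ → Bool}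
    (hv : NEZ v) (hne : v ≠ blockWord k fun _ => weps) :
    fSigma k sigma weps (valInf v) = ⨆ n, valFin (blockApply k sigma (prefixOf v (n * k))) := by
  rw [fSigma, if_neg, tilde_valInf hv]
  · rw [tilde_valInf hv, not_or, not_not]
    exact ⟨⟨v, hv, rfl⟩, fun h => hne (funext h)⟩

section Interleave

variable {k : ℕ} {u : ℕ → List Bool} {weps : List Bool}

lemma length_interleave (hu : ∀ i, (u i).length = k) (hlen : weps.length = k) (i : ℕ) :
    (interleave u weps i).length = k := by
  unfold interleave; split <;> simp [hu, hlen]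

lemma NEZ_blockWord_interleave (hu : ∀ i, (u i).length = k) (hlen : weps.length = k)
    (hue : ∀ i, u i ≠ weps) : NEZ (blockWord k (interleave u weps)) := by
  refine NEZ_blockWord (length_interleave hu hlen) fun N => ?_
  by_cases hw : true ∈ weps
  · exact ⟨2 * N + 1, by omega, by simpa [interleave] using hw⟩
  · refine ⟨2 * N, by omega, ?_⟩
    simp only [interleave, Nat.mul_mod_right, Nat.mul_div_cancel_left _ two_pos, if_true]
    by_contra hN
    have hfalse : ∀ l : List Bool, true ∉ l → l = List.replicate l.length false := fun l hl =>
      List.eq_replicate_length.2 fun b hb => by cases b <;> simp_all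
    exact hue N (by rw [hfalse _ hN, hfalse _ hw, hu N, hlen])

lemma blockWord_interleave_ne (hu : ∀ i, (u i).length = k) (hlen : weps.length = k)
    (hue : ∀ i, u i ≠ weps) : blockWord k (interleave u weps) ≠ blockWord k fun _ => weps := by
  intro h
  have h1 := congrArg (prefixOf · (1 * k)) h
  simp only [prefixOf_blockWord (length_interleave hu hlen), prefixOf_blockWord (fun _ => hlen),
    concatPre_succ', concatPre_zero, List.append_nil] at h1
  exact hue 0 (by simpa [interleave] using h1)

lemma fSigma_valInf_blockWord_interleave (hk : 0 < k) (sigma : List Bool → List Bool)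
    (hu : ∀ i, (u i).length = k) (hlen : weps.length = k) (hue : ∀ i, u i ≠ weps)
    (hsigma : sigma weps = []) :
    fSigma k sigma weps (valInf (blockWord k (interleave u weps)))
      = ⨆ n, valFin (concatPre (fun i => sigma (u i)) ((n + 1) / 2)) := by
  rw [fSigma_valInf (NEZ_blockWord_interleave hu hlen hue) (blockWord_interleave_ne hu hlen hue)]
  congr! 2 with n
  rw [prefixOf_blockWord (length_interleave hu hlen),
    blockApply_concatPre hk sigma (length_interleave hu hlen), ← concatPre_interleave_nil]
  congr 2 with i
  simp only [interleave, apply_ite sigma, hsigma]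

end Interleave

theorem fSigma_surjective_general
    (k : Nat) (sigma : List Bool -> List Bool) (weps : List Bool)
    (hk : 2 ≤ k) (hlen : weps.length = k)
    (herase : ∀ w : List Bool, w.length = k → (sigma w = [] ↔ w = weps))
    (hOC : OC k sigma) :
    Set.SurjOn (fSigma k sigma weps) (Set.Icc 0 1) (Set.Icc 0 1) := by
  intro y hy
  obtain ⟨w, rfl⟩ := exists_valInf_eq hy
  obtain ⟨u, hu, hprefix⟩ := hOC w
  have hue : ∀ i, u i ≠ weps := fun i h => (hu i).2 ((herase _ (hu i).1).2 h)
  refine ⟨valInf (blockWord k (interleave u weps)), ⟨valInf_nonneg _, valInf_le_one _⟩, ?_⟩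
  rw [fSigma_valInf_blockWord_interleave (by omega) sigma (fun i => (hu i).1) hlen hue
    ((herase weps hlen).2 rfl)]
  refine ciSup_valFin_eq_valInf (fun n => hprefix _) fun M => ⟨2 * M, ?_⟩
  calc M = (2 * M + 1) / 2 := by omega
    _ ≤ _ := le_length_concatPre (fun i => (hu i).2) _

/-- if the erasing `k`-block substitution `sigma` satisfies the
optimality condition, the induced interval map `fSigma` maps `[0,1]` onto
`[0,1]`. -/
theorem fSigma_surjective
    (k : Nat) (sigma : List Bool -> List Bool) (weps : List Bool)
    (hk : 2 ≤ k) (hlen : weps.length = k)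
    (hne1 : weps ≠ List.replicate k true)
    (herase : ∀ w : List Bool, w.length = k → (sigma w = [] ↔ w = weps))
    (hOC : OC k sigma) :
    Set.SurjOn (fSigma k sigma weps) (Set.Icc 0 1) (Set.Icc 0 1) :=
  fSigma_surjective_general k sigma weps hk hlen herase hOC
end
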